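/- arXiv:1704.07408 — 5 statements merged into one kernel-verified Lean document; each statement's English description precedes it below -/
import Mathlib

section
/- If X is a path-connected SLT space and H is a subgroup of π₁(X, x₀), then for any two points x, y ∈ X the fibers (p_H⁻¹(x))^wh and (p_H⁻¹(y))^wh are homeomorphic; in particular, all fibers of an lpc₀-covering map over X are homeomorphic. -/
/-!
For a path `δ` from `x` to `y`, right concatenation `[α]_H ↦ [α ⋆ δ]_H` maps the fiber over `x`
bijectively onto the fiber over `y`, with inverse given by `δ⁻¹`. It is continuous for the
whisker topology because `X` is SLT at `y`: a nearby point `[α ⋆ β]_H` of the fiber, with `β` a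
small loop at `x`, is sent to `[α ⋆ β ⋆ δ]_H = [α ⋆ δ ⋆ (δ⁻¹ ⋆ β ⋆ δ)]_H`, and SLT makes the
loop `δ⁻¹ ⋆ β ⋆ δ` homotopic to a loop inside any prescribed neighbourhood of `y`.
-/

open Set TopologicalSpace unitInterval

universe u

namespace SLTF

attribute [local instance] Path.Homotopic.setoid

variable {X : Type u} [TopologicalSpace X]

/-- The homotopy class of a loop as an element of the fundamental group. -/
noncomputable def fl {x : X} (γ : Path x x) : FundamentalGroup X x :=
  @FundamentalGroup.fromPath X _ x ⟦γ⟧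

/-- Multiplication of fundamental-group elements in path-concatenation order:
`pmul a b` is the class of "`a` followed by `b`". -/
noncomputable def pmul {x : X} (a b : FundamentalGroup X x) : FundamentalGroup X x :=
  @FundamentalGroup.fromPath X _ x
    (Path.Homotopic.Quotient.trans (@FundamentalGroup.toPath X _ x a)
      (@FundamentalGroup.toPath X _ x b))

/-- A path in `X` starting at the base point `x`, recorded together with its end point. -/
structure PPath (X : Type u) [TopologicalSpace X] (x : X) where
  target : X
  path : Path x target

/-- Two paths starting at `x` are identified when they have the same end point and the
class of `α ⬝ β⁻¹` satisfies the predicate `P` (e.g. membership in a subgroup `H`). -/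
def HRel (x : X) (P : Path x x → Prop) (α β : PPath X x) : Prop :=
  ∃ h : α.target = β.target, P (α.path.trans ((β.path.cast rfl h).symm))

/-- The set `X̃` of `P`-equivalence classes of paths starting at `x`. -/
def Xtilde (x : X) (P : Path x x → Prop) : Type u := Quot (HRel x P)

/-- The class of a path in `X̃`. -/
def mkX (x : X) (P : Path x x → Prop) (α : PPath X x) : Xtilde x P := Quot.mk _ α

/-- The basic whisker-open set `([α], U)`: all classes of prolongations of `α` by a path in `U`. -/
def whBasic (x : X) (P : Path x x → Prop) (α : PPath X x) (U : Set X) : Set (Xtilde x P) :=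
  { q | ∃ (y : X) (β : Path α.target y), range ⇑β ⊆ U ∧ q = mkX x P ⟨y, α.path.trans β⟩ }

/-- The whisker topology on `X̃`, generated by the sets `([α], U)` for `U` an open
neighbourhood of the end point of `α`. -/
instance whTop (x : X) (P : Path x x → Prop) : TopologicalSpace (Xtilde x P) :=
  generateFrom
    { S | ∃ (α : PPath X x) (U : Set X), IsOpen U ∧ α.target ∈ U ∧ S = whBasic x P α U }

/-- The endpoint projection `p : X̃ → X`. -/
def endpt (x : X) (P : Path x x → Prop) : Xtilde x P → X :=
  Quot.lift (fun α => α.target) (fun _ _ h => h.elim fun e _ => e)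

/-- The space of paths in `X` starting at `x`, with the compact-open topology. -/
def PSp (X : Type u) [TopologicalSpace X] (x : X) : Type u := { f : C(I, X) // f 0 = x }

instance (x : X) : TopologicalSpace (PSp X x) := instTopologicalSpaceSubtype

/-- The natural surjection from the path space onto `X̃`. -/
def toXt (x : X) (P : Path x x → Prop) : PSp X x → Xtilde x P :=
  fun f => mkX x P ⟨f.1 1, ⟨f.1, f.2, rfl⟩⟩

/-- The quotient of the compact-open topology on `X̃`. -/
def topTop (x : X) (P : Path x x → Prop) : TopologicalSpace (Xtilde x P) :=
  coinduced (toXt x P) inferInstance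

/-- Membership in a subgroup `H`, as a predicate on loops. -/
noncomputable def loopMem (x : X) (H : Subgroup (FundamentalGroup X x)) : Path x x → Prop :=
  fun γ => fl γ ∈ H

/-- `X̃_H`, the classes of paths starting at `x₀` modulo `H`. -/
abbrev XtildeH (x₀ : X) (H : Subgroup (FundamentalGroup X x₀)) : Type u :=
  Xtilde x₀ (loopMem x₀ H)

/-- The fiber of the endpoint projection over `y`, with the subspace (whisker) topology. -/
abbrev Fib (x : X) (P : Path x x → Prop) (y : X) : Type u :=
  { q : Xtilde x P // endpt x P q = y }

/-- The class in the fiber over `y` of a path from `x` to `y`. -/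
def mkFib (x : X) (P : Path x x → Prop) {y : X} (δ : Path x y) : Fib x P y :=
  ⟨mkX x P ⟨y, δ⟩, rfl⟩

/-- The whisker topology on the fundamental group `π₁(X, x)`: basic neighbourhoods of `a`
are the sets `{a ⋆ [γ] : γ a loop in U at x}` for `U` an open neighbourhood of `x`. -/
noncomputable def whPi1 (x : X) : TopologicalSpace (FundamentalGroup X x) :=
  generateFrom
    { S | ∃ (a : FundamentalGroup X x) (U : Set X), IsOpen U ∧ x ∈ U ∧
        S = { b | ∃ γ : Path x x, range ⇑γ ⊆ U ∧ b = pmul a (fl γ) } }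

/-- The quotient topology on `π₁(X, x)` induced from the loop space with the
compact-open topology. -/
noncomputable def qtopPi1 (x : X) : TopologicalSpace (FundamentalGroup X x) :=
  coinduced (fun γ : Path x x => fl γ) inferInstance

/-- `X` is `H`-SLT at `x₀`. -/
noncomputable def IsHSLTAt (x₀ : X) (H : Subgroup (FundamentalGroup X x₀)) : Prop :=
  ∀ (y : X) (α : Path x₀ y) (U : Set X), IsOpen U → x₀ ∈ U →
    ∃ V : Set X, IsOpen V ∧ y ∈ V ∧
      ∀ β : Path y y, range ⇑β ⊆ V →
        ∃ γ : Path x₀ x₀, range ⇑γ ⊆ U ∧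
          fl ((α.trans (β.trans α.symm)).trans γ.symm) ∈ H

/-- `X` is SLT at `x`. -/
def IsSLTAt (X : Type u) [TopologicalSpace X] (x : X) : Prop :=
  ∀ (y : X) (α : Path x y) (U : Set X), IsOpen U → x ∈ U →
    ∃ V : Set X, IsOpen V ∧ y ∈ V ∧
      ∀ β : Path y y, range ⇑β ⊆ V →
        ∃ γ : Path x x, range ⇑γ ⊆ U ∧ (α.trans (β.trans α.symm)).Homotopic γ

/-- `X` is an SLT space. -/
def IsSLT (X : Type u) [TopologicalSpace X] : Prop := ∀ x : X, IsSLTAt X x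

/-- `α` (a path from `x` to `y`) is an `H`-SLT path: for every path `lam` from `x₀` to `x`
and open `U ∋ x` there is an open `V ∋ y` such that every loop `β` in `V` at `y` transfers
to a loop `γ` in `U` at `x` with `[α ⋆ β ⋆ α⁻¹ ⋆ γ⁻¹] ∈ [lam⁻¹ H lam]`, i.e.
`[lam ⋆ (α ⋆ β ⋆ α⁻¹ ⋆ γ⁻¹) ⋆ lam⁻¹] ∈ H`. -/
noncomputable def IsHSLTPath (x₀ : X) (H : Subgroup (FundamentalGroup X x₀)) {x y : X}
    (α : Path x y) : Prop :=
  ∀ (lam : Path x₀ x) (U : Set X), IsOpen U → x ∈ U →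
    ∃ V : Set X, IsOpen V ∧ y ∈ V ∧
      ∀ β : Path y y, range ⇑β ⊆ V →
        ∃ γ : Path x x, range ⇑γ ⊆ U ∧
          fl (lam.trans ((((α.trans (β.trans α.symm)).trans γ.symm)).trans lam.symm)) ∈ H

/-- `X` is an `H`-SLT space: for every `x` and every path `lam` from `x₀` to `x`, `X` is
`[lam⁻¹ H lam]`-SLT at `x`. -/
noncomputable def IsHSLTSpace (x₀ : X) (H : Subgroup (FundamentalGroup X x₀)) : Prop :=
  ∀ (x y : X) (α : Path x y), IsHSLTPath x₀ H α

/-- Membership in the conjugate subgroup `[lam⁻¹ H lam]` of `π₁(X, x)`,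
as a predicate on loops at `x`. -/
noncomputable def conjMem (x₀ : X) (H : Subgroup (FundamentalGroup X x₀)) {x : X}
    (lam : Path x₀ x) : Path x x → Prop :=
  fun δ => fl (lam.trans (δ.trans lam.symm)) ∈ H

/-- `X` is homotopically Hausdorff relative to `H`. -/
noncomputable def HomHausdorffRel (x₀ : X) (H : Subgroup (FundamentalGroup X x₀)) : Prop :=
  ∀ (y : X) (α : Path x₀ y) (g : FundamentalGroup X x₀), g ∉ H →
    ∃ U : Set X, IsOpen U ∧ y ∈ U ∧
      ∀ γ : Path y y, range ⇑γ ⊆ U →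
        ¬ ∃ h ∈ H, fl (α.trans (γ.trans α.symm)) = pmul h g

/-- `X` is homotopically path Hausdorff relative to `H`. -/
noncomputable def HomPathHausdorffRel (x₀ : X) (H : Subgroup (FundamentalGroup X x₀)) : Prop :=
  ∀ (y : X) (α β : Path x₀ y), fl (α.trans β.symm) ∉ H →
    ∃ (n : ℕ) (t : Fin (n + 1) → I) (U : Fin n → Set X),
      t 0 = 0 ∧ t (Fin.last n) = 1 ∧ StrictMono t ∧
      (∀ i : Fin n, IsOpen (U i)) ∧
      (∀ i : Fin n, ⇑α '' Set.Icc (t i.castSucc) (t i.succ) ⊆ U i) ∧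
      ∀ γ : Path x₀ y,
        (∀ i : Fin n, ⇑γ '' Set.Icc (t i.castSucc) (t i.succ) ⊆ U i) →
        (∀ i : Fin (n + 1), γ (t i) = α (t i)) →
        fl (γ.trans β.symm) ∉ H

/-- The endpoint projection `p : X̃ → X` (with the whisker topology on `X̃`) has the
unique path lifting property. -/
def UPLP (x : X) (P : Path x x → Prop) : Prop :=
  ∀ g₁ g₂ : C(I, Xtilde x P), g₁ 0 = g₂ 0 →
    (∀ t, endpt x P (g₁ t) = endpt x P (g₂ t)) → g₁ = g₂

/-- A semicovering map: a local homeomorphism with (continuous) unique lifting of paths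
and of homotopies. -/
structure IsSemicovering {Y : Type u} [TopologicalSpace Y] (p : Y → X) : Prop where
  localHomeo : IsLocalHomeomorph p
  pathLift : ∀ (y : Y) (γ : C(I, X)), γ 0 = p y →
    ∃! γh : C(I, Y), γh 0 = y ∧ ∀ t, p (γh t) = γ t
  contPathLift : ∀ y : Y, ∃ L : { γ : C(I, X) // γ 0 = p y } → C(I, Y),
    Continuous L ∧ ∀ γ, (L γ) 0 = y ∧ ∀ t, p ((L γ) t) = (γ : C(I, X)) t
  homotopyLift : ∀ (y : Y) (Φ : C(I × I, X)), Φ (0, 0) = p y →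
    ∃! Φh : C(I × I, Y), Φh (0, 0) = y ∧ ∀ z, p (Φh z) = Φ z
  contHomotopyLift : ∀ y : Y, ∃ L : { Φ : C(I × I, X) // Φ (0, 0) = p y } → C(I × I, Y),
    Continuous L ∧ ∀ Φ, (L Φ) (0, 0) = y ∧ ∀ z, p ((L Φ) z) = (Φ : C(I × I, X)) z

/-- An `lpc₀`-covering map with `p₊π₁(Y, ·) = H`: a map which is equivalent, as a map
over `X`, to the endpoint projection `p_H : X̃_H → X` having the unique path lifting
property (with `Y` path connected and locally path connected). -/
structure IsLpc0Covering {Y : Type u} [TopologicalSpace Y] (p : Y → X) (x₀ : X)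
    (H : Subgroup (FundamentalGroup X x₀)) : Prop where
  pathConnected : PathConnectedSpace Y
  locPathConnected : LocPathConnectedSpace Y
  uplp : UPLP x₀ (loopMem x₀ H)
  equiv : ∃ φ : Y ≃ₜ XtildeH x₀ H, ∀ y, endpt x₀ (loopMem x₀ H) (φ y) = p y

/-- The homomorphism induced by `p` on fundamental groups, as a function. -/
noncomputable def pStar {Y : Type u} [TopologicalSpace Y] (p : C(Y, X)) (y₀ : Y) :
    FundamentalGroup Y y₀ → FundamentalGroup X (p y₀) :=
  fun g => @FundamentalGroup.fromPath X _ (p y₀)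
    (Path.Homotopic.Quotient.map (@FundamentalGroup.toPath Y _ y₀ g) p)

@[simp]
theorem _root_.Path.Homotopic.Quotient.trans_symm_trans {x y z : X}
    (γ : Path.Homotopic.Quotient x y) (δ : Path.Homotopic.Quotient x z) :
    γ.trans (γ.symm.trans δ) = δ := by
  rw [← Path.Homotopic.Quotient.trans_assoc, Path.Homotopic.Quotient.trans_symm,
    Path.Homotopic.Quotient.refl_trans]

@[simp]
theorem _root_.Path.Homotopic.Quotient.symm_trans_trans {x y z : X}
    (γ : Path.Homotopic.Quotient x y) (δ : Path.Homotopic.Quotient y z) :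
    γ.symm.trans (γ.trans δ) = δ := by
  rw [← Path.Homotopic.Quotient.trans_assoc, Path.Homotopic.Quotient.symm_trans,
    Path.Homotopic.Quotient.refl_trans]

theorem trans_trans_homotopic_of_conj_homotopic {a x y : X} (p : Path a x) (δ : Path x y)
    {β : Path x x} {γ : Path y y} (h : (δ.symm.trans (β.trans δ.symm.symm)).Homotopic γ) :
    ((p.trans β).trans δ).Homotopic ((p.trans δ).trans γ) := by
  rw [← Path.Homotopic.Quotient.eq] at h ⊢
  simp [← h]

section FiberTransport

variable {x₀ : X}

theorem fl_trans_symm_of_homotopic {z : X} {p q : Path x₀ z} (h : p.Homotopic q) :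
    fl (p.trans q.symm) = 1 := by
  change Path.Homotopic.Quotient.mk (p.trans q.symm) = .refl x₀
  simp [Path.Homotopic.Quotient.eq.mpr h]

theorem fl_trans_trans_symm {z w : X} (p q : Path x₀ z) (d : Path z w) :
    fl ((p.trans d).trans (q.trans d).symm) = fl (p.trans q.symm) := by
  change Path.Homotopic.Quotient.mk _ = .mk _
  simp [Path.trans_symm]

theorem isOpen_whBasic {P : Path x₀ x₀ → Prop} (α : PPath X x₀) {U : Set X} (hU : IsOpen U)
    (hα : α.target ∈ U) : IsOpen (whBasic x₀ P α U) :=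
  GenerateOpen.basic _ ⟨α, U, hU, hα, rfl⟩

theorem endpt_mem_of_mem_whBasic {P : Path x₀ x₀ → Prop} {α : PPath X x₀} {U : Set X}
    {q : Xtilde x₀ P} (hq : q ∈ whBasic x₀ P α U) : endpt x₀ P q ∈ U := by
  obtain ⟨z, β, hβ, rfl⟩ := hq
  exact hβ ⟨1, β.target⟩

theorem mkFib_surjective {P : Path x₀ x₀ → Prop} {x : X} :
    Function.Surjective (mkFib x₀ P (y := x)) := by
  rintro ⟨q, hq⟩
  induction q using Quot.ind with
  | mk α =>
    obtain ⟨z, p⟩ := α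
    obtain rfl : z = x := hq
    exact ⟨p, rfl⟩

theorem exists_loop_of_mem_whBasic {P : Path x₀ x₀ → Prop} {x : X} {p : Path x₀ x} {V : Set X}
    {q : Fib x₀ P x} (hq : q.1 ∈ whBasic x₀ P ⟨x, p⟩ V) :
    ∃ β : Path x x, range β ⊆ V ∧ q = mkFib x₀ P (p.trans β) := by
  obtain ⟨q, hqx⟩ := q
  obtain ⟨z, β, hβ, rfl⟩ := hq
  obtain rfl : z = x := hqx
  exact ⟨β, hβ, rfl⟩

variable (H : Subgroup (FundamentalGroup X x₀))

theorem mkX_eq_of_homotopic {z : X} {p q : Path x₀ z} (h : p.Homotopic q) :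
    mkX x₀ (loopMem x₀ H) ⟨z, p⟩ = mkX x₀ (loopMem x₀ H) ⟨z, q⟩ :=
  Quot.sound ⟨rfl, show fl (p.trans q.symm) ∈ H by
    rw [fl_trans_symm_of_homotopic h]; exact H.one_mem⟩

theorem mkFib_eq_of_homotopic {z : X} {p q : Path x₀ z} (h : p.Homotopic q) :
    mkFib x₀ (loopMem x₀ H) p = mkFib x₀ (loopMem x₀ H) q :=
  Subtype.ext (mkX_eq_of_homotopic H h)

theorem mkFib_mem_whBasic_self {x : X} (p : Path x₀ x) {U : Set X} (hx : x ∈ U) :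
    (mkFib x₀ (loopMem x₀ H) p).1 ∈ whBasic x₀ (loopMem x₀ H) ⟨x, p⟩ U :=
  ⟨x, Path.refl x, by simpa using hx, mkX_eq_of_homotopic H (Path.Homotopic.trans_refl p).symm⟩

-- Paths not ending at `x` are left alone: only the fiber over `x` matters.
noncomputable def transRep {x y : X} (δ : Path x y) (α : PPath X x₀) : XtildeH x₀ H :=
  open Classical in
  if h : α.target = x then mkX x₀ (loopMem x₀ H) ⟨y, (α.path.cast rfl h.symm).trans δ⟩
  else mkX x₀ (loopMem x₀ H) α

theorem transRep_sound {x y : X} (δ : Path x y) (α β : PPath X x₀)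
    (hαβ : HRel x₀ (loopMem x₀ H) α β) : transRep H δ α = transRep H δ β := by
  obtain ⟨z, p⟩ := α
  obtain ⟨w, q⟩ := β
  obtain ⟨hzw, hpq⟩ := hαβ
  change z = w at hzw
  subst hzw
  unfold transRep
  by_cases hz : z = x
  · subst hz
    rw [dif_pos rfl, dif_pos rfl]
    refine Quot.sound ⟨rfl, ?_⟩
    show fl ((p.trans δ).trans (q.trans δ).symm) ∈ H
    rwa [fl_trans_trans_symm]
  · rw [dif_neg hz, dif_neg hz]
    exact Quot.sound ⟨rfl, hpq⟩

noncomputable def transX {x y : X} (δ : Path x y) : XtildeH x₀ H → XtildeH x₀ H :=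
  Quot.lift (transRep H δ) (transRep_sound H δ)

theorem transX_mkX {x y : X} (δ : Path x y) (p : Path x₀ x) :
    transX H δ (mkX x₀ (loopMem x₀ H) ⟨x, p⟩) = mkX x₀ (loopMem x₀ H) ⟨y, p.trans δ⟩ := by
  change transRep H δ ⟨x, p⟩ = _
  rw [transRep, dif_pos rfl]
  rfl

theorem mkFib_trans_mem_whBasic {y : X} {α : PPath X x₀} {U : Set X} {r : Path x₀ y}
    (hr : (mkFib x₀ (loopMem x₀ H) r).1 ∈ whBasic x₀ (loopMem x₀ H) α U) {γ : Path y y}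
    (hγ : range γ ⊆ U) :
    (mkFib x₀ (loopMem x₀ H) (r.trans γ)).1 ∈ whBasic x₀ (loopMem x₀ H) α U := by
  obtain ⟨z, β, hβ, hrβ⟩ := hr
  obtain rfl : y = z := congrArg (endpt x₀ (loopMem x₀ H)) hrβ
  refine ⟨y, β.trans γ, Path.trans_range β γ ▸ union_subset hβ hγ, ?_⟩
  have hrγ := congrArg (transX H γ) hrβ
  rw [transX_mkX] at hrγ
  exact (transX_mkX H γ r).symm.trans
    (hrγ.trans (mkX_eq_of_homotopic H (Path.Homotopic.trans_assoc _ _ _)))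

noncomputable def transFib {x y : X} (δ : Path x y) :
    Fib x₀ (loopMem x₀ H) x → Fib x₀ (loopMem x₀ H) y :=
  fun q => ⟨transX H δ q.1, by
    obtain ⟨p, rfl⟩ := mkFib_surjective q
    exact congrArg (endpt x₀ (loopMem x₀ H)) (transX_mkX H δ p)⟩

theorem transFib_mkFib {x y : X} (δ : Path x y) (p : Path x₀ x) :
    transFib H δ (mkFib x₀ (loopMem x₀ H) p) = mkFib x₀ (loopMem x₀ H) (p.trans δ) :=
  Subtype.ext (transX_mkX H δ p)

theorem transFib_symm_transFib {x y : X} (δ : Path x y) (q : Fib x₀ (loopMem x₀ H) x) :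
    transFib H δ.symm (transFib H δ q) = q := by
  obtain ⟨p, rfl⟩ := mkFib_surjective q
  rw [transFib_mkFib, transFib_mkFib]
  refine mkFib_eq_of_homotopic H ?_
  rw [← Path.Homotopic.Quotient.eq]
  simp

theorem continuous_transFib {x y : X} (hy : IsSLTAt X y) (δ : Path x y) :
    Continuous (transFib H δ) := by
  refine Continuous.subtype_mk (continuous_generateFrom_iff.mpr ?_) _
  rintro _ ⟨a, U, hU, -, rfl⟩
  refine isOpen_iff_forall_mem_open.mpr fun q hq => ?_
  obtain ⟨p, rfl⟩ := mkFib_surjective q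
  have hpδ : (mkFib x₀ (loopMem x₀ H) (p.trans δ)).1 ∈ whBasic x₀ (loopMem x₀ H) a U := by
    rw [← transFib_mkFib]; exact hq
  obtain ⟨V, hV, hxV, hslt⟩ := hy x δ.symm U hU (endpt_mem_of_mem_whBasic hpδ)
  refine ⟨Subtype.val ⁻¹' whBasic x₀ (loopMem x₀ H) ⟨x, p⟩ V, ?_,
    (isOpen_whBasic _ hV hxV).preimage continuous_subtype_val, mkFib_mem_whBasic_self H p hxV⟩
  intro q' hq'
  obtain ⟨β, hβ, rfl⟩ := exists_loop_of_mem_whBasic hq'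
  obtain ⟨γ, hγ, hβγ⟩ := hslt β hβ
  show (transFib H δ (mkFib x₀ (loopMem x₀ H) (p.trans β))).1 ∈ whBasic x₀ (loopMem x₀ H) a U
  rw [transFib_mkFib, mkFib_eq_of_homotopic H (trans_trans_homotopic_of_conj_homotopic p δ hβγ)]
  exact mkFib_trans_mem_whBasic H hpδ hγ

noncomputable def transFibHomeomorph {x y : X} (hx : IsSLTAt X x) (hy : IsSLTAt X y)
    (δ : Path x y) : Fib x₀ (loopMem x₀ H) x ≃ₜ Fib x₀ (loopMem x₀ H) y where
  toFun := transFib H δ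
  invFun := transFib H δ.symm
  left_inv := transFib_symm_transFib H δ
  right_inv q := by simpa using transFib_symm_transFib H δ.symm q
  continuous_toFun := continuous_transFib H hy δ
  continuous_invFun := continuous_transFib H hx δ.symm

end FiberTransport

/-- If `X` is a path-connected SLT space and `H` is a subgroup of
`π₁(X, x₀)`, then for any two points `x, y ∈ X` the fibers `(p_H⁻¹(x))^wh` and
`(p_H⁻¹(y))^wh` are homeomorphic; in particular, all fibers of an `lpc₀`-covering map
over `X` are homeomorphic. -/
theorem statement9 {X : Type u} [TopologicalSpace X] [PathConnectedSpace X] (x₀ : X)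
    (hslt : IsSLT X) (H : Subgroup (FundamentalGroup X x₀)) (x y : X) :
    Nonempty (Fib x₀ (loopMem x₀ H) x ≃ₜ Fib x₀ (loopMem x₀ H) y) := by
  obtain ⟨δ⟩ := PathConnectedSpace.joined x y
  exact ⟨transFibHomeomorph H (hslt x) (hslt y) δ⟩

end SLTF
end

section
/- Let p : X̂ → X be a semicovering map, x̂₀ ∈ p⁻¹(x₀), H a subgroup of π₁(X, x₀), and Ĥ the subgroup of π₁(X̂, x̂₀) with p_*Ĥ = H. If α is an H-SLT path in X from x₀ to x, then the lift α̂ of α starting at x̂₀ is an Ĥ-SLT path in X̂. -/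
open Set TopologicalSpace unitInterval

universe u

namespace SLTF

attribute [local instance] Path.Homotopic.setoid

variable {X : Type u} [TopologicalSpace X]

/-!
Since `p` is a local homeomorphism, loops at `p x̂₀` in a small enough neighbourhood lift to
loops at `x̂₀` inside any prescribed neighbourhood `U`; so the loop `γ` supplied by the
`H`-SLT property of `α = p ∘ α̂` lifts to a loop `γ̂` in `U`. The loop
`lam ⋆ α̂ ⋆ β ⋆ α̂⁻¹ ⋆ γ̂⁻¹ ⋆ lam⁻¹` then projects to one whose class lies in `H = p₊Ĥ`, and
homotopy lifting makes `p₊` injective, so its class lies in `Ĥ`.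
-/

section Lifting

variable {Y : Type u} [TopologicalSpace Y]

theorem pStar_fl (p : C(Y, X)) {y₀ : Y} (δ : Path y₀ y₀) :
    pStar p y₀ (fl δ) = fl (δ.map p.continuous) :=
  rfl

theorem _root_.IsLocalHomeomorph.exists_nhds_loop_lift {p : Y → X} (hp : IsLocalHomeomorph p)
    {y : Y} {U : Set Y} (hU : IsOpen U) (hy : y ∈ U) :
    ∃ U' : Set X, IsOpen U' ∧ p y ∈ U' ∧ ∀ γ : Path (p y) (p y), range γ ⊆ U' →
      ∃ γh : Path y y, range γh ⊆ U ∧ ∀ t, p (γh t) = γ t := by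
  obtain ⟨e, hye, rfl⟩ := hp y
  have hW : U ∩ e.source ⊆ e.source := inter_subset_right
  refine ⟨e '' (U ∩ e.source), e.isOpen_image_of_subset_source (hU.inter e.open_source) hW,
    mem_image_of_mem e ⟨hy, hye⟩, fun γ hγ => ?_⟩
  have hγt : range γ ⊆ e.target := hγ.trans ((image_mono hW).trans e.image_source_eq_target.le)
  have hsymm : ∀ {x}, x = e y → e.symm x = y := fun hx => by rw [hx, e.left_inv hye]
  refine ⟨⟨⟨fun t => e.symm (γ t),
      e.continuousOn_symm.comp_continuous γ.continuous fun t => hγt ⟨t, rfl⟩⟩,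
      hsymm γ.source, hsymm γ.target⟩, ?_, fun t => e.right_inv (hγt ⟨t, rfl⟩)⟩
  rintro _ ⟨t, rfl⟩
  obtain ⟨w, hw, hwt⟩ := hγ ⟨t, rfl⟩
  change e.symm (γ t) ∈ U
  rw [← hwt, e.left_inv hw.2]
  exact hw.1

namespace IsSemicovering

variable {p : C(Y, X)} (hp : IsSemicovering ⇑p)
include hp

theorem eq_of_comp_eq {c₁ c₂ : I → Y} (h₁ : Continuous c₁) (h₂ : Continuous c₂)
    (he : ∀ t, p (c₁ t) = p (c₂ t)) (h0 : c₁ 0 = c₂ 0) (t : I) : c₁ t = c₂ t := by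
  obtain ⟨c, -, hc⟩ := hp.pathLift (c₁ 0) (p.comp ⟨c₁, h₁⟩) rfl
  have hc₁ := hc ⟨c₁, h₁⟩ ⟨rfl, fun _ => rfl⟩
  have hc₂ := hc ⟨c₂, h₂⟩ ⟨h0.symm, fun t => (he t).symm⟩
  exact congr($(hc₁.trans hc₂.symm) t)

theorem homotopic_of_map_homotopic {y₀ y₁ : Y} {γ₀ γ₁ : Path y₀ y₁}
    (h : (γ₀.map p.continuous).Homotopic (γ₁.map p.continuous)) : γ₀.Homotopic γ₁ := by
  obtain ⟨F⟩ := h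
  obtain ⟨Φ, ⟨hΦ0, hΦ⟩, -⟩ := hp.homotopyLift y₀ F.toContinuousMap (by simp)
  have hΦ' : ∀ s t, p (Φ (s, t)) = F (s, t) := fun s t => hΦ (s, t)
  -- Each edge of the square is the unique lift of the corresponding edge of `F`.
  have bottom (s : I) : Φ (s, 0) = y₀ :=
    hp.eq_of_comp_eq (c₁ := fun s => Φ (s, 0)) (c₂ := fun _ => y₀) (by fun_prop)
      continuous_const (fun s => by simp [hΦ']) hΦ0 s
  have left (t : I) : Φ (0, t) = γ₀ t :=
    hp.eq_of_comp_eq (c₁ := fun t => Φ (0, t)) (by fun_prop) γ₀.continuous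
      (fun t => by simp [hΦ']) (by simp [hΦ0]) t
  have right (t : I) : Φ (1, t) = γ₁ t :=
    hp.eq_of_comp_eq (c₁ := fun t => Φ (1, t)) (by fun_prop) γ₁.continuous
      (fun t => by simp [hΦ']) (by simp [bottom]) t
  have top (s : I) : Φ (s, 1) = y₁ :=
    hp.eq_of_comp_eq (c₁ := fun s => Φ (s, 1)) (c₂ := fun _ => y₁) (by fun_prop)
      continuous_const (fun s => by simp [hΦ']) (by simp [left]) s
  refine ⟨⟨{ toContinuousMap := Φ, map_zero_left := left, map_one_left := right }, ?_⟩⟩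
  rintro s t (rfl | rfl)
  · simpa using bottom s
  · simpa using top s

theorem injective_path_homotopic_map (y₀ y₁ : Y) :
    Function.Injective fun γ : Path.Homotopic.Quotient y₀ y₁ => γ.map p := by
  refine Path.Homotopic.Quotient.ind₂ fun γ₀ γ₁ h => ?_
  simp only [← Path.Homotopic.Quotient.mk_map, Path.Homotopic.Quotient.eq] at h ⊢
  exact hp.homotopic_of_map_homotopic h

theorem injective_pStar (y₀ : Y) : Function.Injective (pStar p y₀) :=
  hp.injective_path_homotopic_map y₀ y₀

end IsSemicovering

end Lifting

/-- Let `p : X̂ → X` be a semicovering map, `x̂₀` a point of `X̂`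
(with base point `x₀ = p x̂₀`), `H` a subgroup of `π₁(X, x₀)`, and `Ĥ` the subgroup of
`π₁(X̂, x̂₀)` with `p₊Ĥ = H`. If `α` is an `H`-SLT path in `X` from `x₀` to `x`, then the
lift `α̂` of `α` starting at `x̂₀` is an `Ĥ`-SLT path in `X̂`. -/
theorem statement10 {X Y : Type u} [TopologicalSpace X] [TopologicalSpace Y]
    (p : C(Y, X)) (hsc : IsSemicovering ⇑p) (xh₀ yh : Y)
    (Hh : Subgroup (FundamentalGroup Y xh₀))
    (H : Subgroup (FundamentalGroup X (p xh₀)))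
    (hH : pStar p xh₀ '' (Hh : Set (FundamentalGroup Y xh₀)) =
      (H : Set (FundamentalGroup X (p xh₀))))
    (α : Path (p xh₀) (p yh)) (hα : IsHSLTPath (p xh₀) H α)
    (αh : Path xh₀ yh) (hlift : ∀ t, p (αh t) = α t) :
    IsHSLTPath xh₀ Hh αh := by
  intro lam U hU hxU
  obtain ⟨U', hU', hxU', liftLoop⟩ := hsc.localHomeo.exists_nhds_loop_lift hU hxU
  obtain ⟨V, hV, hyV, hαV⟩ := hα (lam.map p.continuous) U' hU' hxU'
  refine ⟨p ⁻¹' V, hV.preimage p.continuous, hyV, fun β hβ => ?_⟩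
  obtain ⟨γ, hγU', hγH⟩ := hαV (β.map p.continuous) (by
    rw [Path.map_coe, range_comp]
    exact image_subset_iff.2 hβ)
  obtain ⟨γh, hγhU, hγh⟩ := liftLoop γ hγU'
  refine ⟨γh, hγhU, (hsc.injective_pStar xh₀).mem_set_image.1 ?_⟩
  have hαh : αh.map p.continuous = α := Path.ext (funext hlift)
  have hγh' : γh.map p.continuous = γ := Path.ext (funext hγh)
  rw [hH, pStar_fl]
  simpa only [SetLike.mem_coe, Path.map_trans, ← Path.map_symm, hαh, hγh'] using hγH

end SLTF
end

section
/- Let X be locally path connected and let H be an open subgroup of π₁^qtop(X, x₀). Then X is an H-SLT space. -/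
open Set TopologicalSpace unitInterval

universe u

namespace SLTF

attribute [local instance] Path.Homotopic.setoid

variable {X : Type u} [TopologicalSpace X]

end SLTF

/-!
Take the transferred loop `γ` to be constant. The map `β ↦ lam ⋆ α ⋆ β ⋆ α⁻¹ ⋆ lam⁻¹` from
loops at `y` to loops at `x₀` is continuous for the compact-open topologies, so the preimage of
the open subgroup `H` is a neighbourhood of the constant loop. In the compact-open topology every
neighbourhood of a constant map contains all maps whose range lies in some open `V ∋ y`.
-/

open Filter Topology

theorem ContinuousMap.exists_isOpen_forall_range_subset_of_mem_nhds_const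
    {α Y : Type*} [TopologicalSpace α] [TopologicalSpace Y] {y : Y} {S : Set C(α, Y)}
    (hS : S ∈ 𝓝 (ContinuousMap.const α y)) :
    ∃ V : Set Y, IsOpen V ∧ y ∈ V ∧ ∀ f : C(α, Y), range f ⊆ V → f ∈ S := by
  have hle : (𝓝 y).lift' (fun V => {f : C(α, Y) | range f ⊆ V}) ≤
      𝓝 (ContinuousMap.const α y) := by
    rw [ContinuousMap.nhds_compactOpen]
    simp only [le_iInf_iff, le_principal_iff]
    intro K _ U hU hKU
    rcases K.eq_empty_or_nonempty with rfl | ⟨t, ht⟩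
    · simp only [mapsTo_empty, ofPred_true, univ_mem]
    · exact mem_of_superset (mem_lift' (hU.mem_nhds (hKU ht)))
        fun f hf _ _ => hf (mem_range_self _)
  obtain ⟨V, ⟨hyV, hV⟩, hVS⟩ :=
    ((nhds_basis_opens y).lift' fun _ _ hVW _ hf => hf.trans hVW).mem_iff.mp (hle hS)
  exact ⟨V, hV, hyV, hVS⟩

theorem Path.exists_isOpen_forall_range_subset_of_mem_nhds_refl
    {X : Type*} [TopologicalSpace X] {x : X} {S : Set (Path x x)} (hS : S ∈ 𝓝 (Path.refl x)) :
    ∃ V : Set X, IsOpen V ∧ x ∈ V ∧ ∀ γ : Path x x, range γ ⊆ V → γ ∈ S := by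
  rw [nhds_induced] at hS
  obtain ⟨T, hT, hTS⟩ := hS
  obtain ⟨V, hV, hxV, hVT⟩ := ContinuousMap.exists_isOpen_forall_range_subset_of_mem_nhds_const hT
  exact ⟨V, hV, hxV, fun γ hγ => hTS (hVT γ hγ)⟩

namespace SLTF

theorem statement15_general {X : Type u} [TopologicalSpace X] (x₀ : X)
    (H : Subgroup (FundamentalGroup X x₀))
    (hopen : @IsOpen _ (qtopPi1 x₀) (H : Set (FundamentalGroup X x₀))) :
    IsHSLTSpace x₀ H := by
  intro x y α lam U _ hxU
  set Φ : Path y y → Path x₀ x₀ := fun β =>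
    lam.trans (((α.trans (β.trans α.symm)).trans (Path.refl x).symm).trans lam.symm)
  have hΦ : Continuous Φ := by fun_prop
  have hΦ_refl : fl (Φ (Path.refl y)) = 1 := by
    change Path.Homotopic.Quotient.mk _ = Path.Homotopic.Quotient.refl x₀
    simp [Φ]
  have hnhds : {β | fl (Φ β) ∈ H} ∈ 𝓝 (Path.refl y) :=
    ((hopen : IsOpen ((fun γ : Path x₀ x₀ => fl γ) ⁻¹' H)).preimage hΦ).mem_nhds
      (show fl (Φ (Path.refl y)) ∈ H from hΦ_refl ▸ H.one_mem)
  obtain ⟨V, hV, hyV, hVH⟩ := Path.exists_isOpen_forall_range_subset_of_mem_nhds_refl hnhds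
  exact ⟨V, hV, hyV, fun β hβ => ⟨Path.refl x, by simpa using hxU, hVH β hβ⟩⟩

/-- Let `X` be locally path connected and let `H` be an open subgroup of
`π₁^qtop(X, x₀)`. Then `X` is an `H`-SLT space. -/
theorem statement15 {X : Type u} [TopologicalSpace X] [PathConnectedSpace X]
    [LocallyPathConnectedSpace X] (x₀ : X)
    (H : Subgroup (FundamentalGroup X x₀))
    (hopen : @IsOpen _ (qtopPi1 x₀) (H : Set (FundamentalGroup X x₀))) :
    IsHSLTSpace x₀ H :=
  statement15_general x₀ H hopen

end SLTF
end

section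
/- Let H be a subgroup of π₁(X, x₀) and let X be a locally path-connected space that is H-SLT at x₀. Then H is an open subgroup of π₁^wh(X, x₀) if and only if H is an open subgroup of π₁^qtop(X, x₀). -/
open Set TopologicalSpace unitInterval

universe u

namespace SLTF

attribute [local instance] Path.Homotopic.setoid

variable {X : Type u} [TopologicalSpace X]

end SLTF

/-!
Both conditions are equivalent to the existence of an open neighbourhood `U` of `x₀` all of
whose loops lie in `H`. For the whisker topology this is immediate. If `H` is open in the
quotient topology, its preimage is a compact-open neighbourhood of the constant loop, and every
such neighbourhood contains all loops in some open `U ∋ x₀`.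

Conversely, given such a `U` and a loop `α` with `[α] ∈ H`, the `H`-SLT property gives every
point `α s` an open neighbourhood `V` whose loops, conjugated by `α|[0,s]`, lie in `H`; this
survives prolonging `α|[0,s]` inside `V`. Subdivide `[0,1]` so that `α` maps each
`[tₙ, tₙ₊₁]` into such a `Vₙ`. Let `f` be a loop that also maps `[tₙ, tₙ₊₁]` into `Vₙ`, with
`f tₙ₊₁` in the path component of `Vₙ ∩ Vₙ₊₁` containing `α tₙ₊₁`, and join `α tₙ` to
`f tₙ` by a path `ηₙ` there. The loop `α|[tₙ,tₙ₊₁] ⋆ ηₙ₊₁ ⋆ f|[tₙ,tₙ₊₁]⁻¹ ⋆ ηₙ⁻¹` lies in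
`Vₙ`, so induction on `n` gives `[α|[0,tₙ] ⋆ ηₙ ⋆ f|[0,tₙ]⁻¹] ∈ H`, and at `tₙ = 1` this is
`[f] ∈ H`. By local path connectedness, these conditions on `f` define a compact-open
neighbourhood of `α`.
-/

open Filter Topology

local notation "⟦" p "⟧ₕ" => Path.Homotopic.Quotient.mk p

namespace Path.Homotopic.Quotient

variable {X : Type u} [TopologicalSpace X] {x y z : X}

lemma trans_symm_rev (p : Path.Homotopic.Quotient x y) (q : Path.Homotopic.Quotient y z) :
    (p.trans q).symm = q.symm.trans p.symm := by
  induction p using Path.Homotopic.Quotient.ind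
  induction q using Path.Homotopic.Quotient.ind
  simp only [← mk_trans, ← mk_symm, Path.trans_symm]

@[simp]
lemma trans_symm_cancel_left (p : Path.Homotopic.Quotient x y)
    (q : Path.Homotopic.Quotient x z) : p.trans (p.symm.trans q) = q := by
  rw [← trans_assoc, trans_symm, refl_trans]

@[simp]
lemma symm_trans_cancel_left (p : Path.Homotopic.Quotient x y)
    (q : Path.Homotopic.Quotient y z) : p.symm.trans (p.trans q) = q := by
  rw [← trans_assoc, symm_trans, refl_trans]

end Path.Homotopic.Quotient

namespace FundamentalGroup

variable {X : Type u} [TopologicalSpace X] {x : X}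

lemma fromPath_trans (p q : Path.Homotopic.Quotient x x) :
    fromPath (p.trans q) = fromPath q * fromPath p :=
  rfl

lemma fromPath_symm (p : Path.Homotopic.Quotient x x) : fromPath p.symm = (fromPath p)⁻¹ :=
  rfl

end FundamentalGroup

namespace Path

variable {X : Type u} [TopologicalSpace X] {x y : X}

def initialSubpath (γ : Path x y) (s : I) : Path x (γ s) :=
  (γ.subpath 0 s).cast γ.source.symm rfl

def finalSubpath (γ : Path x y) (s : I) : Path (γ s) y :=
  (γ.subpath s 1).cast rfl γ.target.symm

lemma range_initialSubpath (γ : Path x y) (s : I) :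
    range (γ.initialSubpath s) = γ '' uIcc 0 s := by
  simp [initialSubpath, range_subpath]

lemma range_finalSubpath (γ : Path x y) (s : I) : range (γ.finalSubpath s) = γ '' uIcc s 1 := by
  simp [finalSubpath, range_subpath]

lemma mk_initialSubpath_trans_subpath (γ : Path x y) (s t : I) :
    ⟦γ.initialSubpath s⟧ₕ.trans ⟦γ.subpath s t⟧ₕ = ⟦γ.initialSubpath t⟧ₕ :=
  congrArg (·.cast γ.source.symm rfl)
    (Homotopic.Quotient.eq.2 ⟨Homotopy.subpathTransSubpath γ 0 s t⟩)

lemma mk_initialSubpath_trans_finalSubpath (γ : Path x y) (s : I) :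
    ⟦γ.initialSubpath s⟧ₕ.trans ⟦γ.finalSubpath s⟧ₕ = ⟦γ⟧ₕ := by
  have h := congrArg (·.cast γ.source.symm γ.target.symm)
    (Homotopic.Quotient.eq.2 ⟨Homotopy.subpathTransSubpath γ 0 s 1⟩)
  rwa [subpath_zero_one] at h

lemma eventually_mapsTo_and_joinedIn [LocallyPathConnectedSpace X] (α : Path x y)
    {t : ℕ → I} (ht : Monotone t) {W : ℕ → Set X} (hWo : ∀ n, IsOpen (W n))
    (hαW : ∀ n, MapsTo α (Icc (t n) (t (n + 1))) (W n)) (N : ℕ) :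
    ∀ᶠ f : Path x y in 𝓝 α, ∀ n < N, MapsTo f (Icc (t n) (t (n + 1))) (W n) ∧
      JoinedIn (W n ∩ W (n + 1)) (α (t (n + 1))) (f (t (n + 1))) := by
  refine ((eventually_all_finite (finite_lt_nat N)).2 fun n _ => ?_).mono fun f hf n hn => hf n hn
  refine ((continuous_induced_dom.tendsto α).eventually
    (ContinuousMap.eventually_mapsTo isCompact_Icc (hWo n) (hαW n))).and ?_
  have hα : α (t (n + 1)) ∈ W n ∩ W (n + 1) :=
    ⟨hαW n ⟨ht n.le_succ, le_rfl⟩, hαW (n + 1) ⟨le_rfl, ht (n + 1).le_succ⟩⟩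
  exact (continuous_eval_const (t (n + 1))).continuousAt.eventually_mem
    ((((hWo n).inter (hWo (n + 1))).pathComponentIn _).mem_nhds (mem_pathComponentIn_self hα))

end Path

lemma unitInterval.exists_monotone_Icc_subset_ordConnectedComponent {A : I → Set I}
    (hA : ∀ s, A s ∈ 𝓝 s) : ∃ t : ℕ → I, t 0 = 0 ∧ Monotone t ∧ (∃ N, ∀ n ≥ N, t n = 1) ∧
      ∀ n, ∃ s, Icc (t n) (t (n + 1)) ⊆ ordConnectedComponent (A s) s :=
  (exists_monotone_Icc_subset_open_cover_unitInterval
    (c := fun s => interior (ordConnectedComponent (A s) s)) (fun _ => isOpen_interior)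
    fun s _ => mem_iUnion.2 ⟨s, mem_interior_iff_mem_nhds.2
      (ordConnectedComponent_mem_nhds.2 (hA s))⟩).imp fun _ ⟨h0, hmono, hN, hsub⟩ =>
    ⟨h0, hmono, hN, fun n => (hsub n).imp fun _ h => h.trans interior_subset⟩

lemma ContinuousMap.exists_isOpen_forall_range_subset_mem {Y X : Type*} [TopologicalSpace Y]
    [TopologicalSpace X] {O : Set C(Y, X)} (hO : IsOpen O) {x : X} (hx : const Y x ∈ O) :
    ∃ U : Set X, IsOpen U ∧ x ∈ U ∧ ∀ g : C(Y, X), range g ⊆ U → g ∈ O := by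
  induction hO with
  | basic s hs =>
    refine ⟨const Y ⁻¹' s, continuous_const'.isOpen_preimage _ (.basic s hs), hx, ?_⟩
    obtain ⟨K, -, V, -, rfl⟩ := hs
    exact fun g hg k hk => hg (mem_range_self k) hk
  | univ => exact ⟨univ, isOpen_univ, mem_univ x, fun _ _ => mem_univ _⟩
  | inter s t _ _ ihs iht =>
    obtain ⟨U, hU, hxU, hUs⟩ := ihs hx.1
    obtain ⟨V, hV, hxV, hVt⟩ := iht hx.2
    exact ⟨U ∩ V, hU.inter hV, ⟨hxU, hxV⟩, fun g hg =>
      ⟨hUs g (hg.trans inter_subset_left), hVt g (hg.trans inter_subset_right)⟩⟩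
  | sUnion S _ ih =>
    obtain ⟨s, hsS, hxs⟩ := hx
    obtain ⟨U, hU, hxU, hUs⟩ := ih s hsS hxs
    exact ⟨U, hU, hxU, fun g hg => ⟨s, hsS, hUs g hg⟩⟩

namespace SLTF

open FundamentalGroup

variable {X : Type u} [TopologicalSpace X] {x₀ : X}

section Coset

variable (H : Subgroup (FundamentalGroup X x₀))

/-- `a` and `b` give the same point of `X̃_H`, as in `HRel`. -/
def IsHRelated {y : X} (a b : Path.Homotopic.Quotient x₀ y) : Prop :=
  fromPath (a.trans b.symm) ∈ H

def IsSmallAlong {y : X} (c : Path.Homotopic.Quotient x₀ y) (W : Set X) : Prop :=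
  ∀ β : Path y y, range β ⊆ W → fromPath (c.trans (⟦β⟧ₕ.trans c.symm)) ∈ H

variable {H}

lemma isHRelated_trans_right_iff {y z : X} {a b : Path.Homotopic.Quotient x₀ y}
    (p : Path.Homotopic.Quotient y z) :
    IsHRelated H (a.trans p) (b.trans p) ↔ IsHRelated H a b := by
  simp [IsHRelated, Path.Homotopic.Quotient.trans_symm_rev]

lemma IsHRelated.mem_iff {a b : Path.Homotopic.Quotient x₀ x₀} (h : IsHRelated H a b) :
    fromPath a ∈ H ↔ fromPath b ∈ H := by
  rw [IsHRelated, fromPath_trans, fromPath_symm] at h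
  constructor
  · intro ha
    simpa only [mul_inv_cancel_right, inv_inv] using H.inv_mem (H.mul_mem h (H.inv_mem ha))
  · intro hb
    simpa only [mul_inv_cancel_left] using H.mul_mem hb h

lemma IsSmallAlong.isHRelated_of_isHRelated {y z : X} {W : Set X}
    {a : Path.Homotopic.Quotient x₀ y} (ha : IsSmallAlong H a W)
    {b : Path.Homotopic.Quotient x₀ z} {η η' : Path y z} (hη : range η ⊆ W)
    (hη' : range η' ⊆ W) (h : IsHRelated H (a.trans ⟦η⟧ₕ) b) :
    IsHRelated H (a.trans ⟦η'⟧ₕ) b := by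
  have hloop := ha (η'.trans η.symm) (by
    rw [Path.trans_range, Path.symm_range]
    exact union_subset hη' hη)
  have e : (a.trans ⟦η'⟧ₕ).trans b.symm =
      (a.trans (⟦η'.trans η.symm⟧ₕ.trans a.symm)).trans ((a.trans ⟦η⟧ₕ).trans b.symm) := by
    simp
  rw [IsHRelated, e, fromPath_trans]
  exact H.mul_mem h hloop

lemma IsSmallAlong.isHRelated_trans {y z y' z' : X} {W : Set X}
    {a : Path.Homotopic.Quotient x₀ y} (ha : IsSmallAlong H a W)
    {b : Path.Homotopic.Quotient x₀ z} {η : Path y z} (hη : range η ⊆ W)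
    (h : IsHRelated H (a.trans ⟦η⟧ₕ) b) {p : Path y y'} {q : Path z z'} {η' : Path y' z'}
    (hp : range p ⊆ W) (hq : range q ⊆ W) (hη' : range η' ⊆ W) :
    IsHRelated H ((a.trans ⟦p⟧ₕ).trans ⟦η'⟧ₕ) (b.trans ⟦q⟧ₕ) := by
  rw [← isHRelated_trans_right_iff ⟦q.symm⟧ₕ]
  convert ha.isHRelated_of_isHRelated hη (η' := p.trans (η'.trans q.symm)) ?_ h using 1
  · simp
  · simp
  · simp only [Path.trans_range, Path.symm_range]
    exact union_subset hp (union_subset hη' hq)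

lemma IsSmallAlong.trans {y z : X} {W : Set X} {c : Path.Homotopic.Quotient x₀ y}
    (hc : IsSmallAlong H c W) {θ : Path y z} (hθ : range θ ⊆ W) :
    IsSmallAlong H (c.trans ⟦θ⟧ₕ) W := by
  intro β hβ
  have := hc (θ.trans (β.trans θ.symm)) (by
    simp only [Path.trans_range, Path.symm_range]
    exact union_subset hθ (union_subset hβ hθ))
  convert this using 2
  simp [Path.Homotopic.Quotient.trans_symm_rev]

end Coset

section Transfer

variable {H : Subgroup (FundamentalGroup X x₀)}

def ContainsLoopsNear (H : Subgroup (FundamentalGroup X x₀)) : Prop :=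
  ∃ U : Set X, IsOpen U ∧ x₀ ∈ U ∧ ∀ γ : Path x₀ x₀, range γ ⊆ U → fl γ ∈ H

lemma IsHSLTAt.exists_isSmallAlong (hslt : IsHSLTAt x₀ H) (hH : ContainsLoopsNear H) {y : X}
    (c : Path x₀ y) : ∃ V, IsOpen V ∧ y ∈ V ∧ IsSmallAlong H ⟦c⟧ₕ V := by
  obtain ⟨U, hU, hx₀U, hUH⟩ := hH
  obtain ⟨V, hV, hyV, hVU⟩ := hslt y c U hU hx₀U
  refine ⟨V, hV, hyV, fun β hβ => ?_⟩
  obtain ⟨γ, hγU, hmem⟩ := hVU β hβ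
  have e : fl ((c.trans (β.trans c.symm)).trans γ.symm) =
      (fl γ)⁻¹ * fromPath (⟦c⟧ₕ.trans (⟦β⟧ₕ.trans ⟦c⟧ₕ.symm)) := rfl
  rw [e] at hmem
  simpa only [mul_inv_cancel_left] using H.mul_mem (hUH γ hγU) hmem

lemma fl_mem_of_mapsTo_of_joinedIn {α f : Path x₀ x₀} (hα : fl α ∈ H) {t : ℕ → I}
    (ht0 : t 0 = 0) (ht : Monotone t) {N : ℕ} (htN : t N = 1) {W : ℕ → Set X}
    (hW : ∀ n, IsSmallAlong H ⟦α.initialSubpath (t n)⟧ₕ (W n))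
    (hαW : ∀ n, MapsTo α (Icc (t n) (t (n + 1))) (W n))
    (hfW : ∀ n < N, MapsTo f (Icc (t n) (t (n + 1))) (W n))
    (hJ : ∀ n < N, JoinedIn (W n ∩ W (n + 1)) (α (t (n + 1))) (f (t (n + 1)))) :
    fl f ∈ H := by
  have hαt : ∀ n, α (t n) ∈ W n := fun n => hαW n ⟨le_rfl, ht n.le_succ⟩
  have hchain : ∀ n ≤ N, ∃ η : Path (α (t n)) (f (t n)), range η ⊆ W n ∧
      IsHRelated H (⟦α.initialSubpath (t n)⟧ₕ.trans ⟦η⟧ₕ) ⟦f.initialSubpath (t n)⟧ₕ := by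
    intro n hn
    induction n with
    | zero =>
      refine ⟨(α.initialSubpath (t 0)).symm.trans (f.initialSubpath (t 0)), ?_, ?_⟩
      · simpa [Path.trans_range, Path.range_initialSubpath, ht0] using hαt 0
      · simp only [IsHRelated, Path.Homotopic.Quotient.mk_trans, Path.Homotopic.Quotient.mk_symm,
          Path.Homotopic.Quotient.trans_symm_cancel_left, Path.Homotopic.Quotient.trans_symm]
        exact H.one_mem
    | succ n ih =>
      obtain ⟨η, hηW, hrel⟩ := ih (by omega)
      have hJn := hJ n (by omega)
      have hαn := (hαW n).image_subset
      have hfn := (hfW n (by omega)).image_subset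
      rw [← uIcc_of_le (ht n.le_succ), ← Path.range_subpath] at hαn hfn
      refine ⟨hJn.somePath, range_subset_iff.2 fun u => (hJn.somePath_mem u).2, ?_⟩
      rw [← α.mk_initialSubpath_trans_subpath (t n) (t (n + 1)),
        ← f.mk_initialSubpath_trans_subpath (t n) (t (n + 1))]
      exact (hW n).isHRelated_trans hηW hrel hαn hfn
        (range_subset_iff.2 fun u => (hJn.somePath_mem u).1)
  obtain ⟨η, hηW, hrel⟩ := hchain N le_rfl
  have hx₀W : {x₀} ⊆ W N := by
    simpa [htN] using hαt N
  -- the final subpaths from `t N = 1` are constant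
  have hαf := (hW N).isHRelated_trans hηW hrel (p := α.finalSubpath (t N))
    (q := f.finalSubpath (t N)) (η' := Path.refl x₀)
    (by simpa [Path.range_finalSubpath, htN] using hx₀W)
    (by simpa [Path.range_finalSubpath, htN] using hx₀W) (by simpa using hx₀W)
  simp only [Path.mk_initialSubpath_trans_finalSubpath, Path.Homotopic.Quotient.mk_refl,
    Path.Homotopic.Quotient.trans_refl] at hαf
  exact hαf.mem_iff.1 hα

theorem preimage_fl_mem_nhds [LocallyPathConnectedSpace X] {α : Path x₀ x₀} (hα : fl α ∈ H)
    (hsmall : ∀ s : I, ∃ V, IsOpen V ∧ α s ∈ V ∧ IsSmallAlong H ⟦α.initialSubpath s⟧ₕ V) :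
    fl ⁻¹' (H : Set (FundamentalGroup X x₀)) ∈ 𝓝 α := by
  choose V hVo hαV hV using hsmall
  obtain ⟨t, ht0, ht, ⟨N, hN⟩, hsub⟩ := exists_monotone_Icc_subset_ordConnectedComponent
    fun s => (hVo s).preimage α.continuous |>.mem_nhds (hαV s)
  choose s hs using hsub
  have hαW : ∀ n, MapsTo α (Icc (t n) (t (n + 1))) (V (s n)) :=
    fun n _ hu => ordConnectedComponent_subset (s := α ⁻¹' V (s n)) (hs n hu)
  have hW : ∀ n, IsSmallAlong H ⟦α.initialSubpath (t n)⟧ₕ (V (s n)) := by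
    intro n
    rw [← α.mk_initialSubpath_trans_subpath (s n) (t n)]
    refine (hV (s n)).trans ?_
    rw [Path.range_subpath, ← mapsTo_iff_image_subset]
    exact mem_ordConnectedComponent.1 (hs n ⟨le_rfl, ht n.le_succ⟩)
  filter_upwards [α.eventually_mapsTo_and_joinedIn ht (fun n => hVo (s n)) hαW N] with f hf
  exact fl_mem_of_mapsTo_of_joinedIn hα ht0 ht (hN N le_rfl) hW hαW (fun n hn => (hf n hn).1)
    fun n hn => (hf n hn).2

end Transfer

section Topologies

variable {H : Subgroup (FundamentalGroup X x₀)}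

lemma pmul_eq_mul (a b : FundamentalGroup X x₀) : pmul a b = b * a :=
  rfl

lemma pmul_pmul_fl (a : FundamentalGroup X x₀) (γ δ : Path x₀ x₀) :
    pmul (pmul a (fl γ)) (fl δ) = pmul a (fl (γ.trans δ)) :=
  (mul_assoc _ _ _).symm

lemma exists_pmul_mem_of_isOpen_whPi1 {O : Set (FundamentalGroup X x₀)}
    (hO : @IsOpen _ (whPi1 x₀) O) {a : FundamentalGroup X x₀} (ha : a ∈ O) :
    ∃ U : Set X, IsOpen U ∧ x₀ ∈ U ∧ ∀ γ : Path x₀ x₀, range γ ⊆ U → pmul a (fl γ) ∈ O := by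
  induction hO with
  | basic s hs =>
    obtain ⟨b, U, hU, hx₀U, rfl⟩ := hs
    obtain ⟨γ₀, hγ₀U, rfl⟩ := ha
    refine ⟨U, hU, hx₀U, fun γ hγU => ⟨γ₀.trans γ, ?_, pmul_pmul_fl b γ₀ γ⟩⟩
    rw [Path.trans_range]
    exact union_subset hγ₀U hγU
  | univ => exact ⟨univ, isOpen_univ, mem_univ x₀, fun _ _ => mem_univ _⟩
  | inter s t _ _ ihs iht =>
    obtain ⟨U, hU, hx₀U, hUs⟩ := ihs ha.1
    obtain ⟨V, hV, hx₀V, hVt⟩ := iht ha.2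
    exact ⟨U ∩ V, hU.inter hV, ⟨hx₀U, hx₀V⟩, fun γ hγ =>
      ⟨hUs γ (hγ.trans inter_subset_left), hVt γ (hγ.trans inter_subset_right)⟩⟩
  | sUnion S _ ih =>
    obtain ⟨s, hsS, has⟩ := ha
    obtain ⟨U, hU, hx₀U, hUs⟩ := ih s hsS has
    exact ⟨U, hU, hx₀U, fun γ hγ => ⟨s, hsS, hUs γ hγ⟩⟩

lemma isOpen_whPi1_iff_containsLoopsNear :
    @IsOpen _ (whPi1 x₀) (H : Set (FundamentalGroup X x₀)) ↔ ContainsLoopsNear H := by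
  constructor
  · intro hH
    obtain ⟨U, hU, hx₀U, hUH⟩ := exists_pmul_mem_of_isOpen_whPi1 hH H.one_mem
    exact ⟨U, hU, hx₀U, fun γ hγ => by
      simpa only [pmul_eq_mul, mul_one, SetLike.mem_coe] using hUH γ hγ⟩
  · rintro ⟨U, hU, hx₀U, hUH⟩
    let _ := whPi1 x₀
    refine isOpen_iff_forall_mem_open.2 fun h hh => ?_
    refine ⟨_, ?_, isOpen_generateFrom_of_mem ⟨h, U, hU, hx₀U, rfl⟩, Path.refl x₀, ?_, ?_⟩
    · rintro _ ⟨γ, hγU, rfl⟩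
      exact H.mul_mem (hUH γ hγU) hh
    · rw [Path.refl_range]
      exact singleton_subset_iff.2 hx₀U
    · exact (one_mul h).symm

lemma isOpen_qtopPi1_iff {S : Set (FundamentalGroup X x₀)} :
    @IsOpen _ (qtopPi1 x₀) S ↔ IsOpen (fl ⁻¹' S : Set (Path x₀ x₀)) :=
  isOpen_coinduced

lemma containsLoopsNear_of_isOpen_preimage_fl
    (hH : IsOpen (fl ⁻¹' (H : Set (FundamentalGroup X x₀)) : Set (Path x₀ x₀))) :
    ContainsLoopsNear H := by
  obtain ⟨O, hO, hpre⟩ := isOpen_induced_iff.1 hH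
  have hconst : ContinuousMap.const I x₀ ∈ O := by
    change Path.refl x₀ ∈ ((↑) : Path x₀ x₀ → C(I, X)) ⁻¹' O
    rw [hpre]
    exact H.one_mem
  obtain ⟨U, hU, hx₀U, hUO⟩ := ContinuousMap.exists_isOpen_forall_range_subset_mem hO hconst
  refine ⟨U, hU, hx₀U, fun γ hγ => ?_⟩
  change γ ∈ fl ⁻¹' (H : Set (FundamentalGroup X x₀))
  rw [← hpre]
  exact hUO γ hγ

end Topologies

theorem statement16_general {X : Type u} [TopologicalSpace X]
    [LocallyPathConnectedSpace X] (x₀ : X)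
    (H : Subgroup (FundamentalGroup X x₀)) (hslt : IsHSLTAt x₀ H) :
    @IsOpen _ (whPi1 x₀) (H : Set (FundamentalGroup X x₀)) ↔
      @IsOpen _ (qtopPi1 x₀) (H : Set (FundamentalGroup X x₀)) := by
  rw [isOpen_whPi1_iff_containsLoopsNear, isOpen_qtopPi1_iff]
  refine ⟨fun hH => isOpen_iff_mem_nhds.2 fun α hα => ?_, containsLoopsNear_of_isOpen_preimage_fl⟩
  exact preimage_fl_mem_nhds hα fun s => hslt.exists_isSmallAlong hH (α.initialSubpath s)

/-- Let `H` be a subgroup of `π₁(X, x₀)` and let `X` be a locally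
path-connected space that is `H`-SLT at `x₀`. Then `H` is an open subgroup of
`π₁^wh(X, x₀)` if and only if `H` is an open subgroup of `π₁^qtop(X, x₀)`. -/
theorem statement16 {X : Type u} [TopologicalSpace X] [PathConnectedSpace X]
    [LocallyPathConnectedSpace X] (x₀ : X)
    (H : Subgroup (FundamentalGroup X x₀)) (hslt : IsHSLTAt x₀ H) :
    @IsOpen _ (whPi1 x₀) (H : Set (FundamentalGroup X x₀)) ↔
      @IsOpen _ (qtopPi1 x₀) (H : Set (FundamentalGroup X x₀)) :=
  statement16_general x₀ H hslt

end SLTF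
end

section
/- If p : X̂ → X is an lpc₀-covering map with p_*π₁(X̂, x̂₀) = H ≤ π₁(X, x₀), then every fiber p⁻¹(x) of p, with the subspace topology, is a Hausdorff space. -/
open Set TopologicalSpace unitInterval

universe u

namespace SLTF

attribute [local instance] Path.Homotopic.setoid

variable {X : Type u} [TopologicalSpace X]

/-!
If two points `[α]_H ≠ [β]_H` of `X̃_H` over the same `x` had no disjoint neighbourhoods, then
`([α]_H, U)` and `([β]_H, U)` would meet for every open `U ∋ x`, which puts `[β]_H` into every
basic neighbourhood `([α]_H, U)`: `[β]_H` specializes to `[α]_H`. The map `I → X̃_H` equal to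
`[β]_H` on `[0, 1)` and to `[α]_H` at `1` is then continuous, and it lifts the constant path at
`x` just as the constant path at `[β]_H` does; unique path lifting gives `[α]_H = [β]_H`.
-/

open CategoryTheory Filter Topology

theorem eq_of_specializes_of_uniquePathLift {Z W : Type*} [TopologicalSpace Z] {π : Z → W}
    (huniq : ∀ g₁ g₂ : C(I, Z), g₁ 0 = g₂ 0 → (∀ t, π (g₁ t) = π (g₂ t)) → g₁ = g₂)
    {a b : Z} (hab : a ⤳ b) (hπ : π a = π b) : a = b := by
  obtain ⟨γ, hγ⟩ := hab.joinedIn (F := {a, b}) (by simp) (by simp)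
  simp only [mem_insert_iff, mem_singleton_iff] at hγ
  have hlift : γ.toContinuousMap = ContinuousMap.const I a :=
    huniq _ _ γ.source fun t => by rcases hγ t with h | h <;> simp [h, hπ]
  simpa using (DFunLike.congr_fun hlift 1).symm

theorem _root_.CategoryTheory.End.inv_eq_inv {C : Type*} [Groupoid C] {c : C} (g : End c) :
    g⁻¹ = inv g :=
  Groupoid.inv_eq_inv g

section PathClasses

def pathHom {x y : X} (p : Path x y) : FundamentalGroupoid.mk x ⟶ FundamentalGroupoid.mk y :=
  ⟦p⟧

@[simp]
lemma pathHom_trans {x y z : X} (p : Path x y) (q : Path y z) :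
    pathHom (p.trans q) = pathHom p ≫ pathHom q :=
  rfl

@[simp]
lemma pathHom_symm {x y : X} (p : Path x y) : pathHom p.symm = inv (pathHom p) := by
  rw [← Groupoid.inv_eq_inv]; rfl

lemma fl_eq_pathHom {x : X} (γ : Path x x) : fl γ = pathHom γ :=
  rfl

variable {x₀ y : X}

lemma fl_trans_symm_eq_one {a b : Path x₀ y} (h : pathHom a = pathHom b) :
    fl (a.trans b.symm) = 1 := by
  simp [fl_eq_pathHom, h, End.one_def]

lemma fl_trans_symm_swap (a b : Path x₀ y) :
    fl (b.trans a.symm) = (fl (a.trans b.symm))⁻¹ := by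
  simp [fl_eq_pathHom, End.inv_eq_inv]

lemma fl_trans_symm_mul (a b c : Path x₀ y) :
    fl (a.trans c.symm) = fl (b.trans c.symm) * fl (a.trans b.symm) := by
  simp [fl_eq_pathHom, End.mul_def]

end PathClasses

section Whisker

variable {x₀ y z : X} {H : Subgroup (FundamentalGroup X x₀)}

lemma hRel_mk_iff {a b : Path x₀ y} :
    HRel x₀ (loopMem x₀ H) ⟨y, a⟩ ⟨y, b⟩ ↔ fl (a.trans b.symm) ∈ H :=
  ⟨fun ⟨_, h⟩ => h, fun h => ⟨rfl, h⟩⟩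

lemma hRel_equivalence : Equivalence (HRel x₀ (loopMem x₀ H)) where
  refl := fun ⟨_, a⟩ => hRel_mk_iff.2 <| by rw [fl_trans_symm_eq_one rfl]; exact H.one_mem
  symm := by
    rintro ⟨_, a⟩ ⟨_, b⟩ ⟨e, h⟩
    dsimp only at e
    subst e
    exact hRel_mk_iff.2 <| by rw [fl_trans_symm_swap]; exact H.inv_mem h
  trans := by
    rintro ⟨_, a⟩ ⟨_, b⟩ ⟨_, c⟩ ⟨e, hab⟩ ⟨e', hbc⟩
    dsimp only at e e'
    subst e e'
    exact hRel_mk_iff.2 <| by rw [fl_trans_symm_mul a b c]; exact H.mul_mem hbc hab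

lemma mkX_eq_mkX_iff {a b : Path x₀ y} :
    mkX x₀ (loopMem x₀ H) ⟨y, a⟩ = mkX x₀ (loopMem x₀ H) ⟨y, b⟩ ↔ fl (a.trans b.symm) ∈ H :=
  Quot.eq.trans <| hRel_equivalence.eqvGen_iff.trans hRel_mk_iff

lemma target_eq_of_mkX_eq {a b : PPath X x₀}
    (h : mkX x₀ (loopMem x₀ H) a = mkX x₀ (loopMem x₀ H) b) : a.target = b.target :=
  congrArg (endpt x₀ _) h

lemma mkX_eq_of_pathHom_eq {a b : Path x₀ y} (h : pathHom a = pathHom b) :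
    mkX x₀ (loopMem x₀ H) ⟨y, a⟩ = mkX x₀ (loopMem x₀ H) ⟨y, b⟩ :=
  mkX_eq_mkX_iff.2 <| by rw [fl_trans_symm_eq_one h]; exact H.one_mem

lemma mkX_trans_congr {a b : Path x₀ y}
    (h : mkX x₀ (loopMem x₀ H) ⟨y, a⟩ = mkX x₀ (loopMem x₀ H) ⟨y, b⟩) (ζ : Path y z) :
    mkX x₀ (loopMem x₀ H) ⟨z, a.trans ζ⟩ = mkX x₀ (loopMem x₀ H) ⟨z, b.trans ζ⟩ := by
  rw [mkX_eq_mkX_iff] at h ⊢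
  simpa [fl_eq_pathHom] using h

lemma isOpen_whBasic_s18 {a : PPath X x₀} {U : Set X} (hU : IsOpen U) (ha : a.target ∈ U) :
    IsOpen (whBasic x₀ (loopMem x₀ H) a U) :=
  GenerateOpen.basic _ ⟨a, U, hU, ha, rfl⟩

lemma mkX_mem_whBasic {a : PPath X x₀} {U : Set X} (ha : a.target ∈ U) :
    mkX x₀ (loopMem x₀ H) a ∈ whBasic x₀ (loopMem x₀ H) a U :=
  ⟨a.target, Path.refl _, by simpa using ha, mkX_eq_of_pathHom_eq (by simp [pathHom])⟩

lemma target_mem_of_mkX_mem_whBasic {a b : PPath X x₀} {U : Set X}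
    (h : mkX x₀ (loopMem x₀ H) b ∈ whBasic x₀ (loopMem x₀ H) a U) : b.target ∈ U := by
  obtain ⟨w, β, hβ, hb⟩ := h
  rw [target_eq_of_mkX_eq hb]
  exact hβ ⟨1, β.target⟩

lemma whBasic_mono {a : PPath X x₀} {U V : Set X} (h : U ⊆ V) :
    whBasic x₀ (loopMem x₀ H) a U ⊆ whBasic x₀ (loopMem x₀ H) a V :=
  fun _ ⟨w, β, hβ, hq⟩ => ⟨w, β, hβ.trans h, hq⟩

lemma whBasic_subset_of_mkX_mem {a b : PPath X x₀} {U : Set X}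
    (h : mkX x₀ (loopMem x₀ H) b ∈ whBasic x₀ (loopMem x₀ H) a U) :
    whBasic x₀ (loopMem x₀ H) b U ⊆ whBasic x₀ (loopMem x₀ H) a U := by
  obtain ⟨w, β, hβ, hb⟩ := h
  obtain ⟨tb, b⟩ := b
  obtain rfl : tb = w := target_eq_of_mkX_eq hb
  rintro q ⟨w', ζ, hζ, rfl⟩
  refine ⟨w', β.trans ζ, by rw [Path.trans_range]; exact union_subset hβ hζ, ?_⟩
  exact (mkX_trans_congr hb ζ).trans (mkX_eq_of_pathHom_eq (by simp))

lemma isTopologicalBasis_whBasic :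
    IsTopologicalBasis { S | ∃ (a : PPath X x₀) (U : Set X), IsOpen U ∧ a.target ∈ U ∧
      S = whBasic x₀ (loopMem x₀ H) a U } where
  exists_subset_inter := by
    rintro _ ⟨a₁, U₁, hU₁, -, rfl⟩ _ ⟨a₂, U₂, hU₂, -, rfl⟩ q ⟨hq₁, hq₂⟩
    obtain ⟨b, rfl⟩ := Quot.exists_rep q
    refine ⟨whBasic x₀ _ b (U₁ ∩ U₂), ⟨b, U₁ ∩ U₂, hU₁.inter hU₂,
      ⟨target_mem_of_mkX_mem_whBasic hq₁, target_mem_of_mkX_mem_whBasic hq₂⟩, rfl⟩,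
      mkX_mem_whBasic ⟨target_mem_of_mkX_mem_whBasic hq₁, target_mem_of_mkX_mem_whBasic hq₂⟩,
      subset_inter ?_ ?_⟩
    · exact (whBasic_mono inter_subset_left).trans (whBasic_subset_of_mkX_mem hq₁)
    · exact (whBasic_mono inter_subset_right).trans (whBasic_subset_of_mkX_mem hq₂)
  sUnion_eq := by
    refine eq_univ_of_forall fun q => ?_
    obtain ⟨a, rfl⟩ := Quot.exists_rep q
    exact ⟨_, ⟨a, univ, isOpen_univ, mem_univ _, rfl⟩, mkX_mem_whBasic (mem_univ _)⟩
  eq_generateFrom := rfl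

lemma nhds_mkX_hasBasis (a : PPath X x₀) :
    (𝓝 (mkX x₀ (loopMem x₀ H) a)).HasBasis (fun U => IsOpen U ∧ a.target ∈ U)
      (whBasic x₀ (loopMem x₀ H) a) where
  mem_iff' S := by
    constructor
    · intro hS
      obtain ⟨_, ⟨b, U, hU, -, rfl⟩, ha, hsub⟩ := isTopologicalBasis_whBasic.mem_nhds_iff.1 hS
      exact ⟨U, ⟨hU, target_mem_of_mkX_mem_whBasic ha⟩, (whBasic_subset_of_mkX_mem ha).trans hsub⟩
    · rintro ⟨U, ⟨hU, ha⟩, hsub⟩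
      exact mem_of_superset ((isOpen_whBasic_s18 hU ha).mem_nhds (mkX_mem_whBasic ha)) hsub

lemma mkX_specializes_of_nhds_neBot {a b : Path x₀ y}
    (h : NeBot (𝓝 (mkX x₀ (loopMem x₀ H) ⟨y, a⟩) ⊓ 𝓝 (mkX x₀ (loopMem x₀ H) ⟨y, b⟩))) :
    mkX x₀ (loopMem x₀ H) ⟨y, b⟩ ⤳ mkX x₀ (loopMem x₀ H) ⟨y, a⟩ := by
  refine (nhds_mkX_hasBasis _).specializes_iff.2 fun U hU => ?_
  obtain ⟨q, ⟨w, δ₁, hδ₁, hq₁⟩, ⟨w', δ₂, hδ₂, hq₂⟩⟩ :=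
    ((nhds_mkX_hasBasis _).inf (nhds_mkX_hasBasis _)).neBot_iff.1 h (i := (U, U)) ⟨hU, hU⟩
  obtain rfl : w = w' := target_eq_of_mkX_eq (hq₁.symm.trans hq₂)
  refine ⟨y, δ₁.trans δ₂.symm, ?_, ?_⟩
  · rw [Path.trans_range, Path.symm_range]
    exact union_subset hδ₁ hδ₂
  calc mkX x₀ (loopMem x₀ H) ⟨y, b⟩
      = mkX x₀ (loopMem x₀ H) ⟨y, (b.trans δ₂).trans δ₂.symm⟩ := mkX_eq_of_pathHom_eq (by simp)
    _ = mkX x₀ (loopMem x₀ H) ⟨y, (a.trans δ₁).trans δ₂.symm⟩ :=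
        mkX_trans_congr (hq₂.symm.trans hq₁) _
    _ = mkX x₀ (loopMem x₀ H) ⟨y, a.trans (δ₁.trans δ₂.symm)⟩ := mkX_eq_of_pathHom_eq (by simp)

lemma eq_of_nhds_neBot_of_uplp (huplp : UPLP x₀ (loopMem x₀ H)) {q₁ q₂ : XtildeH x₀ H}
    (hq : endpt x₀ (loopMem x₀ H) q₁ = endpt x₀ (loopMem x₀ H) q₂) (h : NeBot (𝓝 q₁ ⊓ 𝓝 q₂)) :
    q₁ = q₂ := by
  induction q₁ using Quot.ind with | mk a => ?_
  induction q₂ using Quot.ind with | mk b => ?_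
  obtain ⟨y, a⟩ := a
  obtain ⟨_, b⟩ := b
  obtain rfl : y = _ := hq
  exact (eq_of_specializes_of_uniquePathLift huplp (mkX_specializes_of_nhds_neBot h) rfl).symm

theorem t2Space_fib (huplp : UPLP x₀ (loopMem x₀ H)) (y : X) :
    T2Space (Fib x₀ (loopMem x₀ H) y) :=
  t2_iff_nhds.2 fun {q₁ q₂} h => Subtype.ext <| eq_of_nhds_neBot_of_uplp huplp
    (q₁.2.trans q₂.2.symm) <| (h.map Subtype.val).mono <| map_inf_le.trans <|
      inf_le_inf (continuous_subtype_val.tendsto _) (continuous_subtype_val.tendsto _)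

end Whisker

theorem statement18_general {X Y : Type u} [TopologicalSpace X]
    [TopologicalSpace Y] (p : Y → X) (x₀ : X)
    (H : Subgroup (FundamentalGroup X x₀)) (hcov : IsLpc0Covering p x₀ H) :
    ∀ x : X, T2Space { y : Y // p y = x } := by
  obtain ⟨φ, hφ⟩ := hcov.equiv
  intro x
  have := t2Space_fib hcov.uplp x
  exact (φ.subtype (q := (endpt x₀ (loopMem x₀ H) · = x)) fun y => by rw [hφ]).symm.t2Space

/-- If `p : X̂ → X` is an `lpc₀`-covering map with
`p₊π₁(X̂, x̂₀) = H ≤ π₁(X, x₀)`, then every fiber `p⁻¹(x)` of `p`, with the subspace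
topology, is a Hausdorff space. -/
theorem statement18 {X Y : Type u} [TopologicalSpace X] [PathConnectedSpace X]
    [TopologicalSpace Y] (p : Y → X) (x₀ : X)
    (H : Subgroup (FundamentalGroup X x₀)) (hcov : IsLpc0Covering p x₀ H) :
    ∀ x : X, T2Space { y : Y // p y = x } :=
  statement18_general p x₀ H hcov

end SLTF
end
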